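/- arXiv:1111.6020 — 6 statements merged into one kernel-verified Lean document; each statement's English description precedes it below -/
import Mathlib

section
/- Suppose smooth curves q_0, …, q_k : ℝ → ℝⁿ and p^0, …, p^{k-1} : ℝ → ℝⁿ satisfy, for all t (with all partial gradients of L evaluated at (t, q_0(t), …, q_k(t))): (i) (p^0)′ = ∂L/∂q_0; (ii) (p^i)′ = ∂L/∂q_i − p^{i−1} for 1 ≤ i ≤ k−1; (iii) p^{k-1} = ∂L/∂q_k; and (iv) q_i′ = q_{i+1} for 0 ≤ i ≤ k−1. Then the remaining equation of the unified formalism is automatically satisfied: Σ_{r=0}^{k} ⟨∂L/∂q_r, q_r′⟩ − Σ_{i=0}^{k-1} ⟨q_{i+1}, (p^i)′⟩ − Σ_{i=0}^{k-1} ⟨p^i, q_{i+1}′⟩ = 0 for all t. (Redundancy of the first equation obtained from the Skinner–Rusk dynamical equation for sections.) -/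
open scoped ContDiff RealInnerProductSpace

noncomputable section

/-- `ℝⁿ` as a Euclidean space. -/
abbrev Evec (n : ℕ) := EuclideanSpace ℝ (Fin n)

/-- The partial gradient `∂L/∂q_i` of a `k`-th order Lagrangian
`L : ℝ × (ℝⁿ)^(k+1) → ℝ` with respect to the variable `q_i`. -/
noncomputable def pgrad {n k : ℕ} (L : ℝ × (Fin (k+1) → Evec n) → ℝ)
    (i : Fin (k+1)) (x : ℝ × (Fin (k+1) → Evec n)) : Evec n :=
  gradient (fun v => L (x.1, Function.update x.2 i v)) (x.2 i)

open Finset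

/-!
Write `aᵢ = ∂L/∂qᵢ`. The identity is pure algebra: by `qᵢ' = qᵢ₊₁` and `(pⁱ)' = aᵢ - pⁱ⁻¹`, for
each `1 ≤ i < k` the terms `⟨aᵢ, qᵢ'⟩ - ⟨qᵢ₊₁, (pⁱ)'⟩ - ⟨pⁱ⁻¹, qᵢ'⟩` cancel (for `i = 0` the first
two already do), and the leftover `⟨a_k, q_k'⟩ - ⟨p^{k-1}, q_k'⟩` vanishes because `p^{k-1} = a_k`.
-/
section MomentumBalance

variable {E : Type*} [NormedAddCommGroup E] [InnerProductSpace ℝ E] (a q q' p p' : ℕ → E)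

theorem sum_range_inner_momentum_balance (m : ℕ) (hq : ∀ i ≤ m, q' i = q (i + 1))
    (hp0 : p' 0 = a 0) (hp : ∀ i, 1 ≤ i → i ≤ m → p' i = a i - p (i - 1)) :
    ∑ i ∈ range (m + 1), (⟪a i, q' i⟫ - ⟪q (i + 1), p' i⟫)
      - ∑ i ∈ range m, ⟪p i, q' (i + 1)⟫ = 0 := by
  induction m with
  | zero => simp [hq 0 le_rfl, hp0, real_inner_comm]
  | succ m ih =>
    have ih := ih (fun i hi => hq i (by omega)) (fun i hi hil => hp i hi (by omega))
    rw [sum_range_succ (fun i => ⟪a i, q' i⟫ - ⟪q (i + 1), p' i⟫) (m + 1),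
      sum_range_succ (fun i => ⟪p i, q' (i + 1)⟫), hq (m + 1) le_rfl, hp (m + 1) (by omega) le_rfl,
      Nat.add_sub_cancel, inner_sub_right, real_inner_comm (a (m + 1)),
      real_inner_comm (p m)]
    linarith

theorem sum_inner_sub_sum_inner_sub_sum_inner_eq_zero (k : ℕ) (hk : 1 ≤ k)
    (hq : ∀ i < k, q' i = q (i + 1)) (hp0 : p' 0 = a 0)
    (hp : ∀ i, 1 ≤ i → i < k → p' i = a i - p (i - 1)) (hpk : p (k - 1) = a k) :
    ∑ r ∈ range (k + 1), ⟪a r, q' r⟫ - ∑ i ∈ range k, ⟪q (i + 1), p' i⟫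
      - ∑ i ∈ range k, ⟪p i, q' (i + 1)⟫ = 0 := by
  obtain ⟨m, rfl⟩ : ∃ m, k = m + 1 := ⟨k - 1, by omega⟩
  have balance := sum_range_inner_momentum_balance a q q' p p' m
    (fun i hi => hq i (by omega)) hp0 (fun i hi hil => hp i hi (by omega))
  rw [Nat.add_sub_cancel] at hpk
  rw [sum_range_succ (fun r => ⟪a r, q' r⟫) (m + 1), sum_range_succ (fun i => ⟪p i, q' (i + 1)⟫),
    hpk]
  rw [sum_sub_distrib] at balance
  linarith

end MomentumBalance

/-- If smooth curves `q_0, …, q_k` and `p^0, …, p^{k-1}` satisfy the momentum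
equations, the algebraic condition `p^{k-1} = ∂L/∂q_k` and the holonomy `q_i' = q_{i+1}`, then
the remaining ("redundant") equation of the unified formalism holds automatically:
`∑_{r=0}^{k} ⟨∂L/∂q_r, q_r'⟩ − ∑_{i=0}^{k-1} ⟨q_{i+1}, (p^i)'⟩ − ∑_{i=0}^{k-1} ⟨p^i, q_{i+1}'⟩ = 0`. -/
theorem stmt2 (n k : ℕ) (hk : 1 ≤ k)
    (L : ℝ × (Fin (k+1) → Evec n) → ℝ)
    (q : ℕ → ℝ → Evec n)
    (p : ℕ → ℝ → Evec n)
    (heq1 : ∀ t, deriv (p 0) t = pgrad L 0 (t, fun j : Fin (k+1) => q (j : ℕ) t))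
    (heq2 : ∀ i, 1 ≤ i → ∀ hik : i ≤ k - 1, ∀ t,
      deriv (p i) t =
        pgrad L ⟨i, by omega⟩ (t, fun j : Fin (k+1) => q (j : ℕ) t) - p (i-1) t)
    (heq3 : ∀ t, p (k-1) t = pgrad L ⟨k, Nat.lt_succ_self k⟩ (t, fun j : Fin (k+1) => q (j : ℕ) t))
    (heq4 : ∀ i ≤ k - 1, ∀ t, deriv (q i) t = q (i+1) t) :
    ∀ t : ℝ,
      (∑ r : Fin (k+1), ⟪pgrad L r (t, fun j : Fin (k+1) => q (j : ℕ) t), deriv (q (r : ℕ)) t⟫)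
      - (∑ i : Fin k, ⟪q ((i : ℕ)+1) t, deriv (p (i : ℕ)) t⟫)
      - (∑ i : Fin k, ⟪p (i : ℕ) t, deriv (q ((i : ℕ)+1)) t⟫) = 0 := by
  intro t
  set x : ℝ × (Fin (k+1) → Evec n) := (t, fun j : Fin (k+1) => q (j : ℕ) t)
  set a : ℕ → Evec n := fun i => if h : i < k + 1 then pgrad L ⟨i, h⟩ x else 0 with ha
  have ha_fin (r : Fin (k + 1)) : pgrad L r x = a r := by simp only [ha, dif_pos r.isLt, Fin.eta]
  simp only [ha_fin, Fin.sum_univ_eq_sum_range (fun r => ⟪a r, deriv (q r) t⟫),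
    Fin.sum_univ_eq_sum_range (fun i => ⟪q (i + 1) t, deriv (p i) t⟫),
    Fin.sum_univ_eq_sum_range (fun i => ⟪p i t, deriv (q (i + 1)) t⟫)]
  refine sum_inner_sub_sum_inner_sub_sum_inner_eq_zero a (q · t) (fun i => deriv (q i) t) (p · t)
    (fun i => deriv (p i) t) k hk (fun i hi => heq4 i (by omega) t) (by rw [heq1]; simp [ha, x])
    (fun i hi hik => by
      rw [heq2 i hi (by omega)]; simp only [ha, x, dif_pos (show i < k + 1 by omega)])
    (by rw [heq3]; simp [ha, x])
end
end

section
/- At every point (t, q_0, q_1, q_2) with q_1 ≠ 0 and g(q_1, q_2) > 0, the Hessian matrix of the relativistic-particle Lagrangian L with respect to q_2 annihilates both q_1 and q_2: for each index A, Σ_B (∂²L/∂q_2^A ∂q_2^B) q_1^B = 0 and Σ_B (∂²L/∂q_2^A ∂q_2^B) q_2^B = 0. -/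
open scoped ContDiff RealInnerProductSpace

noncomputable section

/-!
As a function of `q₂`, the Lagrangian is `α / ‖q₁‖²` times the area `√g(q₁, q₂)` of the
parallelogram spanned by `q₁` and `q₂`, plus a constant. The area is invariant under the shear
`q₂ ↦ q₂ + s • q₁` and positively homogeneous of degree one in `q₂`, so its gradient is invariant
under the shear and homogeneous of degree zero. The gradient is therefore constant along the lines
through `q₂` in the directions `q₁` and `q₂`, and its derivative, the Hessian, kills both.
-/

open scoped Topology
open Function

section Calculus

variable {𝕜 : Type*} [NontriviallyNormedField 𝕜]
  {E : Type*} [NormedAddCommGroup E] [NormedSpace 𝕜 E]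
  {F : Type*} [NormedAddCommGroup F] [NormedSpace 𝕜 F]

theorem Function.Periodic.fderiv {f : E → F} {a : E} (hf : Periodic f a) :
    Periodic (fderiv 𝕜 f) a := fun x => by
  rw [← fderiv_comp_add_right, show (fun y => f (y + a)) = f from funext hf]

theorem fderiv_smul_eq_of_map_smul {f : E → F} {c : 𝕜} (hc : c ≠ 0)
    (hf : ∀ y, f (c • y) = c • f y) (x : E) : fderiv 𝕜 f (c • x) = fderiv 𝕜 f x := by
  have h := fderiv_comp_smul (f := f) (x := x) c
  rw [show (fun y => f (c • y)) = c • f from funext hf, fderiv_const_smul_field] at h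
  exact (smul_right_injective _ hc h).symm

theorem fderiv_apply_eq_zero_of_eventually_eq_on_line {f : E → F} {x v : E}
    (hf : ∀ᶠ s : 𝕜 in 𝓝 0, f (x + s • v) = f x) : fderiv 𝕜 f x v = 0 := by
  by_cases hd : DifferentiableAt 𝕜 f x
  · have hconst : (fun s : 𝕜 => f (x + s • v)) =ᶠ[𝓝 0] fun _ => f x := hf
    rw [← hd.lineDeriv_eq_fderiv, lineDeriv, hconst.deriv_eq, deriv_const]
  · rw [fderiv_zero_of_not_differentiableAt hd, zero_apply]

end Calculus

section Gradient

variable {𝕜 : Type*} [RCLike 𝕜] {E : Type*} [NormedAddCommGroup E] [InnerProductSpace 𝕜 E]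
  [CompleteSpace E]

theorem Function.Periodic.gradient {f : E → 𝕜} {a : E} (hf : Periodic f a) :
    Periodic (gradient f) a := fun x => by
  simp only [_root_.gradient, hf.fderiv x]

theorem gradient_smul_eq_of_map_smul {f : E → 𝕜} {c : 𝕜} (hc : c ≠ 0)
    (hf : ∀ y, f (c • y) = c * f y) (x : E) : gradient f (c • x) = gradient f x := by
  simp only [gradient, fderiv_smul_eq_of_map_smul hc hf]

theorem gradient_add_const (f : E → 𝕜) (a : 𝕜) :
    gradient (fun y => f y + a) = gradient f := by
  ext1 x
  simp only [gradient, fderiv_add_const]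

end Gradient

theorem EuclideanSpace.sum_apply_single_mul {𝕜 ι : Type*} [RCLike 𝕜] [Fintype ι] [DecidableEq ι]
    (φ : EuclideanSpace 𝕜 ι →L[𝕜] 𝕜) (u : EuclideanSpace 𝕜 ι) :
    ∑ i, φ (EuclideanSpace.single i 1) * u i = φ u := by
  conv_rhs => rw [← (EuclideanSpace.basisFun ι 𝕜).sum_repr u]
  simp [mul_comm]

section ParallelogramArea

variable {E : Type*} [NormedAddCommGroup E] [InnerProductSpace ℝ E]

def parallelogramArea (b c : E) : ℝ := √(‖b‖ ^ 2 * ‖c‖ ^ 2 - ⟪b, c⟫ ^ 2)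

theorem parallelogramArea_periodic (b : E) (s : ℝ) : Periodic (parallelogramArea b) (s • b) :=
  fun c => by
  simp only [parallelogramArea, ← real_inner_self_eq_norm_sq, inner_add_left, inner_add_right,
    real_inner_smul_left, real_inner_smul_right, real_inner_comm c b]
  ring_nf

theorem parallelogramArea_smul_right (b c : E) {r : ℝ} (hr : 0 ≤ r) :
    parallelogramArea b (r • c) = r * parallelogramArea b c := by
  have hgram : ‖b‖ ^ 2 * ‖r • c‖ ^ 2 - ⟪b, r • c⟫ ^ 2 =
      r ^ 2 * (‖b‖ ^ 2 * ‖c‖ ^ 2 - ⟪b, c⟫ ^ 2) := by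
    rw [norm_smul, real_inner_smul_right, Real.norm_eq_abs, mul_pow, sq_abs]
    ring
  rw [parallelogramArea, parallelogramArea, hgram, Real.sqrt_mul (sq_nonneg r), Real.sqrt_sq hr]

end ParallelogramArea

theorem stmt12_general (n : ℕ) (α : ℝ)
    (V : ℝ × Evec n → ℝ)
    (L : ℝ × Evec n × Evec n × Evec n → ℝ)
    (hL : ∀ (t : ℝ) (a b c : Evec n),
      L (t, a, b, c) = (α / ‖b‖^2) * Real.sqrt (‖b‖^2 * ‖c‖^2 - ⟪b, c⟫^2) + V (t, a))
    (t : ℝ) (q0 q1 q2 : Evec n)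
    (W : Matrix (Fin n) (Fin n) ℝ)
    (hW : ∀ A B, W A B =
      fderiv ℝ (fun v : Evec n => gradient (fun w : Evec n => L (t, q0, q1, w)) v A)
        q2 (EuclideanSpace.single B 1)) :
    ∀ A : Fin n, (∑ B : Fin n, W A B * q1 B = 0) ∧ (∑ B : Fin n, W A B * q2 B = 0) := by
  intro A
  set f : Evec n → ℝ := fun w => α / ‖q1‖ ^ 2 * parallelogramArea q1 w
  have hgrad : gradient (fun w : Evec n => L (t, q0, q1, w)) = gradient f := by
    simp only [hL]
    exact gradient_add_const f _
  have hsum (u : Evec n) :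
      ∑ B, W A B * u B = fderiv ℝ (fun v => gradient f v A) q2 u := by
    simp only [hW, hgrad]
    exact EuclideanSpace.sum_apply_single_mul _ u
  refine ⟨(hsum q1).trans (fderiv_apply_eq_zero_of_eventually_eq_on_line ?_),
    (hsum q2).trans (fderiv_apply_eq_zero_of_eventually_eq_on_line ?_)⟩
  · refine .of_forall fun s => ?_
    have hper : Periodic f (s • q1) := (parallelogramArea_periodic q1 s).comp _
    rw [hper.gradient q2]
  · filter_upwards [eventually_gt_nhds (neg_lt_zero.2 one_pos)] with s hs
    have hpos : 0 < 1 + s := by linarith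
    have hhom (y : Evec n) : f ((1 + s) • y) = (1 + s) * f y := by
      simp only [f, parallelogramArea_smul_right _ _ hpos.le]
      ring
    rw [show q2 + s • q2 = (1 + s) • q2 by module, gradient_smul_eq_of_map_smul hpos.ne' hhom]

/-- At every point with `q₁ ≠ 0` and `g(q₁, q₂) > 0`, the Hessian of the
relativistic-particle Lagrangian `L = (α/|q₁|²)√g + V(t, q₀)` with respect to `q₂`
annihilates both `q₁` and `q₂`. -/
theorem stmt12 (n : ℕ) (hn : 2 ≤ n) (α : ℝ) (hα : α ≠ 0)
    (V : ℝ × Evec n → ℝ) (hV : ContDiff ℝ ∞ V)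
    (L : ℝ × Evec n × Evec n × Evec n → ℝ)
    (hL : ∀ (t : ℝ) (a b c : Evec n),
      L (t, a, b, c) = (α / ‖b‖^2) * Real.sqrt (‖b‖^2 * ‖c‖^2 - ⟪b, c⟫^2) + V (t, a))
    (t : ℝ) (q0 q1 q2 : Evec n) (hq1 : q1 ≠ 0)
    (hg : 0 < ‖q1‖^2 * ‖q2‖^2 - ⟪q1, q2⟫^2)
    (W : Matrix (Fin n) (Fin n) ℝ)
    (hW : ∀ A B, W A B =
      fderiv ℝ (fun v : Evec n => gradient (fun w : Evec n => L (t, q0, q1, w)) v A)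
        q2 (EuclideanSpace.single B 1)) :
    ∀ A : Fin n, (∑ B : Fin n, W A B * q1 B = 0) ∧ (∑ B : Fin n, W A B * q2 B = 0) :=
  stmt12_general n α V L hL t q0 q1 q2 W hW
end
end

section
/- The relativistic-particle Lagrangian is singular: at every point (t, q_0, q_1, q_2) with q_1 ≠ 0 and g(q_1, q_2) > 0, the determinant of the n×n Hessian matrix (∂²L/∂q_2^B ∂q_2^A) vanishes. -/
/-!
The kinetic part `q₂ ↦ (α/|q₁|²) √g(q₁, q₂)` is positively homogeneous of degree one in `q₂`,
so its gradient is homogeneous of degree zero: it is constant along the ray through `q₂`.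
Differentiating along that ray shows that the Hessian annihilates `q₂ ≠ 0`, hence it is
singular. The potential does not depend on `q₂` and drops out of the Hessian.
-/

open scoped ContDiff RealInnerProductSpace

noncomputable section

open scoped Topology

section Homogeneous

variable {E F : Type*} [NormedAddCommGroup E] [NormedSpace ℝ E]
  [NormedAddCommGroup F] [NormedSpace ℝ F]

theorem HasFDerivAt.at_smul_of_posHomogeneous {f : E → F} {f' : E →L[ℝ] F} {x : E}
    (hf : ∀ s : ℝ, 0 < s → ∀ y, f (s • y) = s • f y) (h : HasFDerivAt f f' x)
    {s : ℝ} (hs : 0 < s) : HasFDerivAt f f' (s • x) := by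
  have hfs : f = fun y => s • f (s⁻¹ • y) := by
    funext y
    rw [← hf s hs, smul_inv_smul₀ hs.ne']
  have hscale : HasFDerivAt (fun y : E => s⁻¹ • y) (s⁻¹ • ContinuousLinearMap.id ℝ E) (s • x) :=
    (s⁻¹ • ContinuousLinearMap.id ℝ E).hasFDerivAt
  rw [← inv_smul_smul₀ hs.ne' x] at h
  rw [hfs]
  refine ((h.comp (s • x) hscale).const_smul s).congr_fderiv ?_
  ext y
  simp [hs.ne']

theorem fderiv_apply_self_eq_zero_of_eventually_const_on_ray {g : E → F} {x : E}
    (hg : DifferentiableAt ℝ g x) (hray : ∀ᶠ s in 𝓝 (1 : ℝ), g (s • x) = g x) :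
    fderiv ℝ g x x = 0 := by
  have hline : HasDerivAt (fun s : ℝ => s • x) x 1 := by
    simpa using (hasDerivAt_id (1 : ℝ)).smul_const x
  have hcurve : HasDerivAt (fun s : ℝ => g (s • x)) (fderiv ℝ g x x) 1 := by
    rw [← one_smul ℝ x] at hg
    simpa [Function.comp_def] using hg.hasFDerivAt.comp_hasDerivAt (1 : ℝ) hline
  have hconst : HasDerivAt (fun s : ℝ => g (s • x)) 0 1 :=
    (hasDerivAt_const (1 : ℝ) (g x)).congr_of_eventuallyEq hray
  exact hcurve.unique hconst

end Homogeneous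

section Gradient

variable {E : Type*} [NormedAddCommGroup E] [InnerProductSpace ℝ E] [CompleteSpace E]

theorem ContDiffAt.differentiableAt_gradient {f : E → ℝ} {x : E} (h : ContDiffAt ℝ 2 f x) :
    DifferentiableAt ℝ (gradient f) x :=
  (InnerProductSpace.toDual ℝ E).symm.differentiableAt.comp x
    ((h.fderiv_right (by norm_num)).differentiableAt one_ne_zero)

theorem gradient_smul_of_posHomogeneous {f : E → ℝ} {x : E}
    (hf : ∀ s : ℝ, 0 < s → ∀ y, f (s • y) = s • f y) (h : DifferentiableAt ℝ f x)
    {s : ℝ} (hs : 0 < s) : gradient f (s • x) = gradient f x :=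
  (h.hasFDerivAt.at_smul_of_posHomogeneous hf hs).hasGradientAt.gradient

theorem fderiv_gradient_apply_self_eq_zero_of_posHomogeneous {f : E → ℝ} {x : E}
    (hf : ∀ s : ℝ, 0 < s → ∀ y, f (s • y) = s • f y) (h : ContDiffAt ℝ 2 f x) :
    fderiv ℝ (gradient f) x x = 0 := by
  refine fderiv_apply_self_eq_zero_of_eventually_const_on_ray h.differentiableAt_gradient ?_
  filter_upwards [eventually_gt_nhds one_pos] with s hs
  exact gradient_smul_of_posHomogeneous hf (h.differentiableAt two_ne_zero) hs

end Gradient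

theorem Matrix.det_eq_zero_of_eq_toMatrix_of_apply_eq_zero {ι : Type*} [Fintype ι] [DecidableEq ι]
    (T : EuclideanSpace ℝ ι →ₗ[ℝ] EuclideanSpace ℝ ι) {W : Matrix ι ι ℝ}
    (hW : ∀ i j, W i j = T (EuclideanSpace.single j 1) i)
    {x : EuclideanSpace ℝ ι} (hx : x ≠ 0) (hTx : T x = 0) : W.det = 0 := by
  have hWT : W = LinearMap.toMatrix (EuclideanSpace.basisFun ι ℝ).toBasis
      (EuclideanSpace.basisFun ι ℝ).toBasis T := by
    ext i j
    simp [LinearMap.toMatrix_apply, hW]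
  rw [hWT, LinearMap.det_toMatrix, LinearMap.det_eq_zero_iff_ker_ne_bot]
  exact (LinearMap.ker T).ne_bot_iff.mpr ⟨x, hTx, hx⟩

theorem fderiv_euclideanSpace_apply {ι E : Type*} [Fintype ι] [NormedAddCommGroup E]
    [NormedSpace ℝ E] {g : E → EuclideanSpace ℝ ι} {x : E} (hg : DifferentiableAt ℝ g x)
    (i : ι) (u : E) : fderiv ℝ (fun v => g v i) x u = fderiv ℝ g x u i := by
  change fderiv ℝ (EuclideanSpace.proj i ∘ g) x u = _
  rw [((EuclideanSpace.proj i).hasFDerivAt.comp x hg.hasFDerivAt).fderiv]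
  rfl

section GramDet

variable {E : Type*} [NormedAddCommGroup E] [InnerProductSpace ℝ E]

def gramDet (a c : E) : ℝ := ‖a‖ ^ 2 * ‖c‖ ^ 2 - ⟪a, c⟫ ^ 2

theorem gramDet_smul_right (a c : E) (s : ℝ) : gramDet a (s • c) = s ^ 2 * gramDet a c := by
  simp only [gramDet, norm_smul, real_inner_smul_right, mul_pow, Real.norm_eq_abs, sq_abs]
  ring

theorem contDiff_gramDet_right (a : E) : ContDiff ℝ ∞ (gramDet a) :=
  (contDiff_const.mul (contDiff_norm_sq ℝ)).sub ((contDiff_const.inner ℝ contDiff_id).pow 2)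

theorem const_mul_sqrt_gramDet_smul_right (k : ℝ) (a c : E) {s : ℝ} (hs : 0 < s) :
    k * √(gramDet a (s • c)) = s • (k * √(gramDet a c)) := by
  rw [gramDet_smul_right, Real.sqrt_mul (sq_nonneg s), Real.sqrt_sq hs.le, smul_eq_mul]
  ring

end GramDet

theorem stmt13_general (n : ℕ) (α : ℝ)
    (V : ℝ × Evec n → ℝ)
    (L : ℝ × Evec n × Evec n × Evec n → ℝ)
    (hL : ∀ (t : ℝ) (a b c : Evec n),
      L (t, a, b, c) = (α / ‖b‖^2) * Real.sqrt (‖b‖^2 * ‖c‖^2 - ⟪b, c⟫^2) + V (t, a))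
    (t : ℝ) (q0 q1 q2 : Evec n)
    (hg : 0 < ‖q1‖^2 * ‖q2‖^2 - ⟪q1, q2⟫^2)
    (W : Matrix (Fin n) (Fin n) ℝ)
    (hW : ∀ A B, W A B =
      fderiv ℝ (fun v : Evec n => gradient (fun w : Evec n => L (t, q0, q1, w)) v A)
        q2 (EuclideanSpace.single B 1)) :
    W.det = 0 := by
  set f : Evec n → ℝ := fun c => α / ‖q1‖ ^ 2 * √(gramDet q1 c)
  have hslice : gradient (fun w => L (t, q0, q1, w)) = gradient f := by
    have : (fun w => L (t, q0, q1, w)) = fun w => f w + V (t, q0) := funext fun w => hL ..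
    ext1 w
    rw [this, gradient, gradient, fderiv_add_const]
  have hf : ContDiffAt ℝ 2 f q2 :=
    contDiffAt_const.mul (((contDiff_gramDet_right q1).contDiffAt.of_le (by norm_cast)).sqrt hg.ne')
  have hq2 : q2 ≠ 0 := by
    rintro rfl
    simp at hg
  refine Matrix.det_eq_zero_of_eq_toMatrix_of_apply_eq_zero (fderiv ℝ (gradient f) q2).toLinearMap
    (fun A B => ?_) hq2
    (fderiv_gradient_apply_self_eq_zero_of_posHomogeneous
      (fun s hs c => const_mul_sqrt_gramDet_smul_right _ q1 c hs) hf)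
  rw [hW, hslice, fderiv_euclideanSpace_apply hf.differentiableAt_gradient]
  rfl

/-- The relativistic-particle Lagrangian `L = (α/|q₁|²)√g + V(t, q₀)` is
singular: at every point with `q₁ ≠ 0` and `g(q₁, q₂) > 0`, the determinant of its Hessian
matrix with respect to `q₂` vanishes. -/
theorem stmt13 (n : ℕ) (hn : 2 ≤ n) (α : ℝ) (hα : α ≠ 0)
    (V : ℝ × Evec n → ℝ) (hV : ContDiff ℝ ∞ V)
    (L : ℝ × Evec n × Evec n × Evec n → ℝ)
    (hL : ∀ (t : ℝ) (a b c : Evec n),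
      L (t, a, b, c) = (α / ‖b‖^2) * Real.sqrt (‖b‖^2 * ‖c‖^2 - ⟪b, c⟫^2) + V (t, a))
    (t : ℝ) (q0 q1 q2 : Evec n) (hq1 : q1 ≠ 0)
    (hg : 0 < ‖q1‖^2 * ‖q2‖^2 - ⟪q1, q2⟫^2)
    (W : Matrix (Fin n) (Fin n) ℝ)
    (hW : ∀ A B, W A B =
      fderiv ℝ (fun v : Evec n => gradient (fun w : Evec n => L (t, q0, q1, w)) v A)
        q2 (EuclideanSpace.single B 1)) :
    W.det = 0 :=
  stmt13_general n α V L hL t q0 q1 q2 hg W hW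
end
end

section
/- For all q_1, q_2 ∈ ℝⁿ with q_1 ≠ 0 and g(q_1, q_2) > 0, the Jacobi–Ostrogradsky momentum p¹(q_1, q_2) = (α/(|q_1|²√g))(|q_1|² q_2 − ⟨q_1, q_2⟩ q_1) satisfies the primary constraints of the relativistic particle: ⟨p¹, q_1⟩ = 0 and |p¹|² = α²/|q_1|² (equivalently |p¹|²|q_1|² = α²), and moreover ⟨p¹, q_2⟩ = α√(g(q_1,q_2))/|q_1|². -/
open scoped RealInnerProductSpace

noncomputable section

section Gram

variable {E : Type*} [NormedAddCommGroup E] [InnerProductSpace ℝ E] (a b : E)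

theorem inner_normSq_smul_sub_inner_smul_self :
    ⟪‖a‖ ^ 2 • b - ⟪a, b⟫ • a, a⟫ = 0 := by
  rw [inner_sub_left, real_inner_smul_left, real_inner_smul_left, real_inner_self_eq_norm_sq,
    real_inner_comm]
  ring

theorem inner_normSq_smul_sub_inner_smul_right :
    ⟪‖a‖ ^ 2 • b - ⟪a, b⟫ • a, b⟫ = ‖a‖ ^ 2 * ‖b‖ ^ 2 - ⟪a, b⟫ ^ 2 := by
  rw [inner_sub_left, real_inner_smul_left, real_inner_smul_left, real_inner_self_eq_norm_sq]
  ring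

theorem norm_normSq_smul_sub_inner_smul_sq :
    ‖‖a‖ ^ 2 • b - ⟪a, b⟫ • a‖ ^ 2 = ‖a‖ ^ 2 * (‖a‖ ^ 2 * ‖b‖ ^ 2 - ⟪a, b⟫ ^ 2) := by
  rw [← real_inner_self_eq_norm_sq, inner_sub_right, real_inner_smul_right, real_inner_smul_right,
    inner_normSq_smul_sub_inner_smul_self, inner_normSq_smul_sub_inner_smul_right]
  ring

end Gram

theorem stmt14_general (n : ℕ) (α : ℝ)
    (q1 q2 : Evec n) (hq1 : q1 ≠ 0)
    (hg : 0 < ‖q1‖^2 * ‖q2‖^2 - ⟪q1, q2⟫^2)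
    (p1 : Evec n)
    (hp1 : p1 = (α / (‖q1‖^2 * Real.sqrt (‖q1‖^2 * ‖q2‖^2 - ⟪q1, q2⟫^2))) •
      (‖q1‖^2 • q2 - ⟪q1, q2⟫ • q1)) :
    ⟪p1, q1⟫ = 0 ∧
    ‖p1‖^2 = α^2 / ‖q1‖^2 ∧
    ‖p1‖^2 * ‖q1‖^2 = α^2 ∧
    ⟪p1, q2⟫ = α * Real.sqrt (‖q1‖^2 * ‖q2‖^2 - ⟪q1, q2⟫^2) / ‖q1‖^2 := by
  have hq1_norm : ‖q1‖ ≠ 0 := norm_ne_zero_iff.mpr hq1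
  set g := ‖q1‖ ^ 2 * ‖q2‖ ^ 2 - ⟪q1, q2⟫ ^ 2
  have hs : √g ≠ 0 := (Real.sqrt_pos.mpr hg).ne'
  have hs_sq : √g ^ 2 = g := Real.sq_sqrt hg.le
  have hnorm : ‖p1‖ ^ 2 = α ^ 2 / ‖q1‖ ^ 2 := by
    rw [hp1, norm_smul, mul_pow, Real.norm_eq_abs, sq_abs, norm_normSq_smul_sub_inner_smul_sq]
    field_simp
    rw [hs_sq]
  refine ⟨?_, hnorm, ?_, ?_⟩
  · rw [hp1, real_inner_smul_left, inner_normSq_smul_sub_inner_smul_self, mul_zero]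
  · rw [hnorm]
    field_simp
  · rw [hp1, real_inner_smul_left, inner_normSq_smul_sub_inner_smul_right]
    field_simp
    rw [hs_sq]

/-- The highest Jacobi–Ostrogradsky momentum
`p¹ = (α/(|q₁|²√g))(|q₁|² q₂ − ⟨q₁,q₂⟩ q₁)` of the relativistic particle satisfies the
primary constraints `⟨p¹, q₁⟩ = 0` and `|p¹|² = α²/|q₁|²` (equivalently
`|p¹|²|q₁|² = α²`), and moreover `⟨p¹, q₂⟩ = α√g/|q₁|²`. -/
theorem stmt14 (n : ℕ) (hn : 2 ≤ n) (α : ℝ) (hα : α ≠ 0)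
    (q1 q2 : Evec n) (hq1 : q1 ≠ 0)
    (hg : 0 < ‖q1‖^2 * ‖q2‖^2 - ⟪q1, q2⟫^2)
    (p1 : Evec n)
    (hp1 : p1 = (α / (‖q1‖^2 * Real.sqrt (‖q1‖^2 * ‖q2‖^2 - ⟪q1, q2⟫^2))) •
      (‖q1‖^2 • q2 - ⟪q1, q2⟫ • q1)) :
    ⟪p1, q1⟫ = 0 ∧
    ‖p1‖^2 = α^2 / ‖q1‖^2 ∧
    ‖p1‖^2 * ‖q1‖^2 = α^2 ∧
    ⟪p1, q2⟫ = α * Real.sqrt (‖q1‖^2 * ‖q2‖^2 - ⟪q1, q2⟫^2) / ‖q1‖^2 :=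
  stmt14_general n α q1 q2 hq1 hg p1 hp1
end
end

section
/- Let q_1, q_2, p^0, p^1 : ℝ → ℝⁿ be smooth curves with q_1(t) ≠ 0 and g(q_1(t), q_2(t)) > 0 for all t, satisfying the unified-formalism equations of the relativistic particle: q_1′ = q_2, p^1(t) = (α/(|q_1|²√g))(|q_1|² q_2 − ⟨q_1, q_2⟩ q_1), and (p^1)′ = −p^0 − (α/(|q_1|⁴√g))[(|q_1|²|q_2|² − 2⟨q_1, q_2⟩²) q_1 + ⟨q_1, q_2⟩ |q_1|² q_2]. Then the derivative along the dynamics of the primary constraint φ₁ = ⟨p^1, q_1⟩ is (d/dt)⟨p^1(t), q_1(t)⟩ = −⟨p^0(t), q_1(t)⟩ for all t (yielding the first-generation secondary constraint ⟨p^0, q_1⟩ = 0). -/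
open scoped ContDiff RealInnerProductSpace

noncomputable section

/-!
The kinetic Lagrangian `L = α √g / |q₁|²` is homogeneous of degree `1` in `q₂` and of degree
`-1` in `q₁`, so Euler's identities give `⟨∂L/∂q₂, q₂⟩ = L` and `⟨∂L/∂q₁, q₁⟩ = -L`.
Since `p¹ = ∂L/∂q₂` and `(p¹)' = ∂L/∂q₁ - p⁰`, the two copies of `L` cancel in
`d/dt ⟨p¹, q₁⟩ = ⟨(p¹)', q₁⟩ + ⟨p¹, q₂⟩`, leaving `-⟨p⁰, q₁⟩`.
-/

namespace RelativisticParticle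

variable {E : Type*} [NormedAddCommGroup E] [InnerProductSpace ℝ E]

def gramDet (x y : E) : ℝ := ‖x‖ ^ 2 * ‖y‖ ^ 2 - ⟪x, y⟫ ^ 2

def lagrangian (α : ℝ) (x y : E) : ℝ := α / ‖x‖ ^ 2 * √(gramDet x y)

/-- `∂L/∂q₂`, the Legendre–Ostrogradsky momentum `p¹`. -/
def momentum (α : ℝ) (x y : E) : E :=
  (α / (‖x‖ ^ 2 * √(gramDet x y))) • (‖x‖ ^ 2 • y - ⟪x, y⟫ • x)

/-- `∂L/∂q₁`. -/
def gradQ₁ (α : ℝ) (x y : E) : E :=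
  -((α / (‖x‖ ^ 4 * √(gramDet x y))) •
    ((‖x‖ ^ 2 * ‖y‖ ^ 2 - 2 * ⟪x, y⟫ ^ 2) • x + (⟪x, y⟫ * ‖x‖ ^ 2) • y))

theorem inner_momentum_velocity (α : ℝ) (x y : E) :
    ⟪momentum α x y, y⟫ = lagrangian α x y := by
  have hpair : ⟪‖x‖ ^ 2 • y - ⟪x, y⟫ • x, y⟫ = gramDet x y := by
    rw [inner_sub_left, real_inner_smul_left, real_inner_smul_left, real_inner_self_eq_norm_sq,
      gramDet]
    ring
  rw [momentum, real_inner_smul_left, hpair, lagrangian]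
  -- `g / √g = √g` holds for every real `g` (junk values included), so no sign condition is needed.
  conv_rhs => rw [← Real.div_sqrt]
  ring

theorem inner_gradQ₁_position (α : ℝ) (x y : E) :
    ⟪gradQ₁ α x y, x⟫ = -lagrangian α x y := by
  have hpair : ⟪(‖x‖ ^ 2 * ‖y‖ ^ 2 - 2 * ⟪x, y⟫ ^ 2) • x + (⟪x, y⟫ * ‖x‖ ^ 2) • y, x⟫ =
      ‖x‖ ^ 2 * gramDet x y := by
    rw [inner_add_left, real_inner_smul_left, real_inner_smul_left, real_inner_self_eq_norm_sq,
      real_inner_comm x y, gramDet]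
    ring
  rw [gradQ₁, inner_neg_left, real_inner_smul_left, hpair, lagrangian]
  conv_rhs => rw [← Real.div_sqrt]
  rcases eq_or_ne ‖x‖ 0 with hx | hx
  · simp [hx]
  · field_simp

end RelativisticParticle

open RelativisticParticle in
theorem stmt15_general (n : ℕ) (α : ℝ)
    (q1 q2 p0 p1 : ℝ → Evec n)
    (hq1s : ContDiff ℝ ∞ q1)
    (hp1s : ContDiff ℝ ∞ p1)
    (hhol : ∀ t, deriv q1 t = q2 t)
    (hp1 : ∀ t, p1 t =
      (α / (‖q1 t‖^2 * Real.sqrt (‖q1 t‖^2 * ‖q2 t‖^2 - ⟪q1 t, q2 t⟫^2))) •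
        (‖q1 t‖^2 • q2 t - ⟪q1 t, q2 t⟫ • q1 t))
    (hp1' : ∀ t, deriv p1 t =
      - p0 t -
        (α / (‖q1 t‖^4 * Real.sqrt (‖q1 t‖^2 * ‖q2 t‖^2 - ⟪q1 t, q2 t⟫^2))) •
          ((‖q1 t‖^2 * ‖q2 t‖^2 - 2 * ⟪q1 t, q2 t⟫^2) • q1 t
            + (⟪q1 t, q2 t⟫ * ‖q1 t‖^2) • q2 t)) :
    ∀ t, deriv (fun s => ⟪p1 s, q1 s⟫) t = - ⟪p0 t, q1 t⟫ := by
  intro t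
  have hmomentum : p1 t = momentum α (q1 t) (q2 t) := hp1 t
  have hforce : deriv p1 t = -p0 t + gradQ₁ α (q1 t) (q2 t) := by
    rw [hp1' t, sub_eq_add_neg]
    rfl
  rw [deriv_inner_apply (𝕜 := ℝ) (hp1s.differentiable (by simp) t) (hq1s.differentiable (by simp) t),
    hforce, hhol t, hmomentum, inner_add_left, inner_neg_left, inner_gradQ₁_position,
    inner_momentum_velocity]
  ring

/-- Along any solution of the unified-formalism equations of the
relativistic particle, the time derivative of the primary constraint `φ₁ = ⟨p¹, q₁⟩` is
`−⟨p⁰, q₁⟩`, yielding the first-generation secondary constraint `⟨p⁰, q₁⟩ = 0`. -/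
theorem stmt15 (n : ℕ) (hn : 2 ≤ n) (α : ℝ) (hα : α ≠ 0)
    (q1 q2 p0 p1 : ℝ → Evec n)
    (hq1s : ContDiff ℝ ∞ q1) (hq2s : ContDiff ℝ ∞ q2)
    (hp0s : ContDiff ℝ ∞ p0) (hp1s : ContDiff ℝ ∞ p1)
    (hq1 : ∀ t, q1 t ≠ 0)
    (hg : ∀ t, 0 < ‖q1 t‖^2 * ‖q2 t‖^2 - ⟪q1 t, q2 t⟫^2)
    (hhol : ∀ t, deriv q1 t = q2 t)
    (hp1 : ∀ t, p1 t =
      (α / (‖q1 t‖^2 * Real.sqrt (‖q1 t‖^2 * ‖q2 t‖^2 - ⟪q1 t, q2 t⟫^2))) •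
        (‖q1 t‖^2 • q2 t - ⟪q1 t, q2 t⟫ • q1 t))
    (hp1' : ∀ t, deriv p1 t =
      - p0 t -
        (α / (‖q1 t‖^4 * Real.sqrt (‖q1 t‖^2 * ‖q2 t‖^2 - ⟪q1 t, q2 t⟫^2))) •
          ((‖q1 t‖^2 * ‖q2 t‖^2 - 2 * ⟪q1 t, q2 t⟫^2) • q1 t
            + (⟪q1 t, q2 t⟫ * ‖q1 t‖^2) • q2 t)) :
    ∀ t, deriv (fun s => ⟪p1 s, q1 s⟫) t = - ⟪p0 t, q1 t⟫ :=
  stmt15_general n α q1 q2 p0 p1 hq1s hp1s hhol hp1 hp1'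
end
end

section
/- Let q_1, q_2, p^0, p^1 : ℝ → ℝⁿ be smooth curves with q_1(t) ≠ 0 and g(q_1(t), q_2(t)) > 0 for all t, satisfying the unified-formalism equations of the relativistic particle: q_1′ = q_2, p^1(t) = (α/(|q_1|²√g))(|q_1|² q_2 − ⟨q_1, q_2⟩ q_1), and (p^1)′ = −p^0 − (α/(|q_1|⁴√g))[(|q_1|²|q_2|² − 2⟨q_1, q_2⟩²) q_1 + ⟨q_1, q_2⟩ |q_1|² q_2]. Then the derivative along the dynamics of the primary constraint φ₂ = |p^1|² − α²/|q_1|² is (d/dt)(|p^1(t)|² − α²/|q_1(t)|²) = −2⟨p^0(t), p^1(t)⟩ for all t (yielding the first-generation secondary constraint ⟨p^0, p^1⟩ = 0). -/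
/-!
The Legendre–Ostrogradsky momentum `p¹` is a multiple of `|q₁|² q₂ − ⟨q₁, q₂⟩ q₁`, the component
of `q₂` orthogonal to `q₁`; hence `⟨q₁, p¹⟩ = 0` and `⟨q₂, p¹⟩ = α √g / |q₁|²`. Pairing the equation
for `(p¹)′` with `p¹` therefore kills the `q₁`-term and leaves
`⟨(p¹)′, p¹⟩ = −⟨p⁰, p¹⟩ − α² ⟨q₁, q₂⟩ / |q₁|⁴`, while `q₁′ = q₂` gives
`(α² / |q₁|²)′ = −2 α² ⟨q₁, q₂⟩ / |q₁|⁴`; the two `α²`-terms cancel.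
-/

open scoped ContDiff RealInnerProductSpace

noncomputable section

section InnerProductSpace

variable {E : Type*} [NormedAddCommGroup E] [InnerProductSpace ℝ E]

theorem inner_norm_sq_smul_sub_inner_smul_eq_zero (x y : E) :
    ⟪x, ‖x‖ ^ 2 • y - ⟪x, y⟫ • x⟫ = 0 := by
  rw [inner_sub_right, inner_smul_right, inner_smul_right, real_inner_self_eq_norm_sq]
  ring

theorem inner_norm_sq_smul_sub_inner_smul_eq_gram (x y : E) :
    ⟪y, ‖x‖ ^ 2 • y - ⟪x, y⟫ • x⟫ = ‖x‖ ^ 2 * ‖y‖ ^ 2 - ⟪x, y⟫ ^ 2 := by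
  rw [inner_sub_right, inner_smul_right, inner_smul_right, real_inner_self_eq_norm_sq,
    real_inner_comm]
  ring

theorem inner_momentum_eq_of_unified_equations {α : ℝ} {x y p p0 : E} (hx : x ≠ 0)
    (hg : 0 < ‖x‖ ^ 2 * ‖y‖ ^ 2 - ⟪x, y⟫ ^ 2)
    (hp : p = (α / (‖x‖ ^ 2 * √(‖x‖ ^ 2 * ‖y‖ ^ 2 - ⟪x, y⟫ ^ 2))) •
      (‖x‖ ^ 2 • y - ⟪x, y⟫ • x)) :
    ⟪-p0 - (α / (‖x‖ ^ 4 * √(‖x‖ ^ 2 * ‖y‖ ^ 2 - ⟪x, y⟫ ^ 2))) •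
        ((‖x‖ ^ 2 * ‖y‖ ^ 2 - 2 * ⟪x, y⟫ ^ 2) • x + (⟪x, y⟫ * ‖x‖ ^ 2) • y), p⟫ =
      -⟪p0, p⟫ - α ^ 2 * ⟪x, y⟫ / ‖x‖ ^ 4 := by
  have hxp : ⟪x, p⟫ = 0 := by
    rw [hp, inner_smul_right, inner_norm_sq_smul_sub_inner_smul_eq_zero, mul_zero]
  have hx0 : ‖x‖ ≠ 0 := norm_ne_zero_iff.mpr hx
  have hsqrt : √(‖x‖ ^ 2 * ‖y‖ ^ 2 - ⟪x, y⟫ ^ 2) ^ 2 = ‖x‖ ^ 2 * ‖y‖ ^ 2 - ⟪x, y⟫ ^ 2 :=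
    Real.sq_sqrt hg.le
  have hsqrt0 : √(‖x‖ ^ 2 * ‖y‖ ^ 2 - ⟪x, y⟫ ^ 2) ≠ 0 := (Real.sqrt_pos.mpr hg).ne'
  have hyp : ⟪y, p⟫ = α * √(‖x‖ ^ 2 * ‖y‖ ^ 2 - ⟪x, y⟫ ^ 2) / ‖x‖ ^ 2 := by
    rw [hp, inner_smul_right, inner_norm_sq_smul_sub_inner_smul_eq_gram]
    field_simp
    rw [hsqrt]
  simp only [inner_sub_left, inner_neg_left, inner_smul_left, inner_add_left, hxp, hyp,
    conj_trivial]
  field_simp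
  ring

theorem HasDerivAt.norm_sq_sub_const_div_norm_sq {p q : ℝ → E} {v w : E} {t : ℝ} (a : ℝ)
    (hp : HasDerivAt p w t) (hq : HasDerivAt q v t) (hq0 : q t ≠ 0) :
    HasDerivAt (fun s => ‖p s‖ ^ 2 - a / ‖q s‖ ^ 2)
      (2 * ⟪p t, w⟫ + 2 * a * ⟪q t, v⟫ / ‖q t‖ ^ 4) t := by
  have hq0' : ‖q t‖ ^ 2 ≠ 0 := by positivity
  refine (hp.norm_sq.sub ((hasDerivAt_const t a).div hq.norm_sq hq0')).congr_deriv ?_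
  field_simp
  ring

end InnerProductSpace

theorem stmt16_general (n : ℕ) (α : ℝ)
    (q1 q2 p0 p1 : ℝ → Evec n)
    (hq1s : ContDiff ℝ ∞ q1)
    (hp1s : ContDiff ℝ ∞ p1)
    (hq1 : ∀ t, q1 t ≠ 0)
    (hg : ∀ t, 0 < ‖q1 t‖^2 * ‖q2 t‖^2 - ⟪q1 t, q2 t⟫^2)
    (hhol : ∀ t, deriv q1 t = q2 t)
    (hp1 : ∀ t, p1 t =
      (α / (‖q1 t‖^2 * Real.sqrt (‖q1 t‖^2 * ‖q2 t‖^2 - ⟪q1 t, q2 t⟫^2))) •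
        (‖q1 t‖^2 • q2 t - ⟪q1 t, q2 t⟫ • q1 t))
    (hp1' : ∀ t, deriv p1 t =
      - p0 t -
        (α / (‖q1 t‖^4 * Real.sqrt (‖q1 t‖^2 * ‖q2 t‖^2 - ⟪q1 t, q2 t⟫^2))) •
          ((‖q1 t‖^2 * ‖q2 t‖^2 - 2 * ⟪q1 t, q2 t⟫^2) • q1 t
            + (⟪q1 t, q2 t⟫ * ‖q1 t‖^2) • q2 t)) :
    ∀ t, deriv (fun s => ‖p1 s‖^2 - α^2 / ‖q1 s‖^2) t = - (2 * ⟪p0 t, p1 t⟫) := by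
  intro t
  have hq1d : HasDerivAt q1 (q2 t) t :=
    hhol t ▸ (hq1s.differentiable (by simp) t).hasDerivAt
  have hp1d : HasDerivAt p1 (deriv p1 t) t := (hp1s.differentiable (by simp) t).hasDerivAt
  rw [(hp1d.norm_sq_sub_const_div_norm_sq (α ^ 2) hq1d (hq1 t)).deriv, real_inner_comm,
    hp1' t, inner_momentum_eq_of_unified_equations (hq1 t) (hg t) (hp1 t)]
  ring

/-- Along any solution of the unified-formalism equations of the
relativistic particle, the time derivative of the primary constraint
`φ₂ = |p¹|² − α²/|q₁|²` is `−2⟨p⁰, p¹⟩`, yielding the first-generation secondary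
constraint `⟨p⁰, p¹⟩ = 0`. -/
theorem stmt16 (n : ℕ) (hn : 2 ≤ n) (α : ℝ) (hα : α ≠ 0)
    (q1 q2 p0 p1 : ℝ → Evec n)
    (hq1s : ContDiff ℝ ∞ q1) (hq2s : ContDiff ℝ ∞ q2)
    (hp0s : ContDiff ℝ ∞ p0) (hp1s : ContDiff ℝ ∞ p1)
    (hq1 : ∀ t, q1 t ≠ 0)
    (hg : ∀ t, 0 < ‖q1 t‖^2 * ‖q2 t‖^2 - ⟪q1 t, q2 t⟫^2)
    (hhol : ∀ t, deriv q1 t = q2 t)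
    (hp1 : ∀ t, p1 t =
      (α / (‖q1 t‖^2 * Real.sqrt (‖q1 t‖^2 * ‖q2 t‖^2 - ⟪q1 t, q2 t⟫^2))) •
        (‖q1 t‖^2 • q2 t - ⟪q1 t, q2 t⟫ • q1 t))
    (hp1' : ∀ t, deriv p1 t =
      - p0 t -
        (α / (‖q1 t‖^4 * Real.sqrt (‖q1 t‖^2 * ‖q2 t‖^2 - ⟪q1 t, q2 t⟫^2))) •
          ((‖q1 t‖^2 * ‖q2 t‖^2 - 2 * ⟪q1 t, q2 t⟫^2) • q1 t
            + (⟪q1 t, q2 t⟫ * ‖q1 t‖^2) • q2 t)) :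
    ∀ t, deriv (fun s => ‖p1 s‖^2 - α^2 / ‖q1 s‖^2) t = - (2 * ⟪p0 t, p1 t⟫) :=
  stmt16_general n α q1 q2 p0 p1 hq1s hp1s hq1 hg hhol hp1 hp1'
end
end
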